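/- arXiv:1209.0832 — 7 statements merged into one kernel-verified Lean document; each statement's English description precedes it below -/
import Mathlib

section
/- If the bids of the winning ad's advertisers are individually rational (each bid is between 0 and the bidder's value) and cooperatively envy-free (for every alternate ad S, the sum of bids of winning-ad bidders not in S is at least the sum of values of bidders in S not in the winning ad), then the winning ad maximizes total value among all ads. -/
open Finset

/-- In a single-slot coopetitive ad auction with advertiser values `v`,
ads `S 0, ..., S (m-1)` and winning ad `T` (one of the ads), if the bids `b` of the
winning ad's advertisers are individually rational (`0 ≤ b i ≤ v i`) and cooperatively
envy-free (for every ad `S j`, `∑_{i ∈ T \ S j} b i ≥ ∑_{i ∈ S j \ T} v i`),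
then `T` maximizes total value among all ads. -/
theorem winning_ad_is_efficient {n m : ℕ} (v b : Fin n → ℝ)
    (S : Fin m → Finset (Fin n)) (T : Finset (Fin n)) (jT : Fin m) (hT : S jT = T)
    (hIR : ∀ i ∈ T, 0 ≤ b i ∧ b i ≤ v i)
    (hCEF : ∀ j, ∑ i ∈ S j \ T, v i ≤ ∑ i ∈ T \ S j, b i) :
    ∀ j, ∑ i ∈ S j, v i ≤ ∑ i ∈ T, v i := by
  intro j
  have h1 : ∑ i ∈ S j, v i = ∑ i ∈ S j ∩ T, v i + ∑ i ∈ S j \ T, v i :=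
    (Finset.sum_inter_add_sum_sdiff _ _ _).symm
  have h2 : ∑ i ∈ T, v i = ∑ i ∈ S j ∩ T, v i + ∑ i ∈ T \ S j, v i := by
    rw [Finset.inter_comm]
    exact (Finset.sum_inter_add_sum_sdiff _ _ _).symm
  have h3 : ∑ i ∈ T \ S j, b i ≤ ∑ i ∈ T \ S j, v i :=
    Finset.sum_le_sum fun i hi => (hIR i (Finset.mem_sdiff.mp hi).1).2
  linarith [hCEF j]
end

section
/- For every advertiser i in the winning ad T, any bid vector in the IR/CEF polytope satisfies b_i ≥ p_i^{VCG}, where p_i^{VCG} is advertiser i's VCG payment, namely max over ads S of ∑_{k∈S} v_k computed without i's value, minus ∑_{k∈T, k≠i} v_k (and 0 if T remains optimal without i). -/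
open Finset

/-- Let `T = S jT` be the welfare-maximizing ad. For every advertiser
`i ∈ T`, any bid vector in the IR/CEF polytope satisfies `b i ≥ p_i^VCG`, where
`p_i^VCG = max 0 (W₋ᵢ − ∑_{k ∈ T, k ≠ i} v k)` and `W₋ᵢ` is the maximum over all ads of
total value computed with `v i` replaced by `0`. -/
theorem bids_at_least_vcg {n m : ℕ} (v b : Fin n → ℝ)
    (S : Fin m → Finset (Fin n)) (T : Finset (Fin n)) (jT : Fin m) (hT : S jT = T)
    (hv : ∀ i, 0 ≤ v i)
    (hmax : ∀ j, ∑ i ∈ S j, v i ≤ ∑ i ∈ T, v i)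
    (hIR : ∀ i ∈ T, 0 ≤ b i ∧ b i ≤ v i)
    (hCEF : ∀ j, ∑ i ∈ S j \ T, v i ≤ ∑ i ∈ T \ S j, b i) :
    ∀ i ∈ T,
      max 0 ((Finset.univ.sup' ⟨jT, Finset.mem_univ jT⟩
          fun j => ∑ k ∈ S j, if k = i then 0 else v k) - ∑ k ∈ T.erase i, v k)
        ≤ b i := by
  intro i hi
  obtain ⟨hb0, hbv⟩ := hIR i hi
  apply max_le hb0
  rw [sub_le_iff_le_add]
  apply Finset.sup'_le
  intro j _
  have h1 : ∑ k ∈ S j, (if k = i then 0 else v k) = ∑ k ∈ (S j).erase i, v k := by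
    rw [← Finset.sum_erase (S j) (f := fun k => if k = i then 0 else v k) (a := i) (by simp)]
    exact Finset.sum_congr rfl fun k hk => by
      simp [Finset.ne_of_mem_erase hk]
  have hset : (S j).erase i \ T = S j \ T := by
    ext k
    simp only [mem_sdiff, mem_erase]
    constructor
    · rintro ⟨⟨_, h⟩, h2⟩; exact ⟨h, h2⟩
    · rintro ⟨h1, h2⟩; exact ⟨⟨fun h => h2 (h ▸ hi), h1⟩, h2⟩
  have h2 : ∑ k ∈ T \ S j, b k ≤ b i + ∑ k ∈ (T \ S j).erase i, v k := by
    by_cases hij : i ∈ T \ S j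
    · rw [← Finset.add_sum_erase _ b hij]
      gcongr with k hk
      exact (hIR k (Finset.mem_sdiff.mp (Finset.mem_of_mem_erase hk)).1).2
    · rw [Finset.erase_eq_of_notMem hij]
      have : ∑ k ∈ T \ S j, b k ≤ ∑ k ∈ T \ S j, v k :=
        Finset.sum_le_sum fun k hk => (hIR k (Finset.mem_sdiff.mp hk).1).2
      linarith
  have h3 : ∑ k ∈ (S j).erase i ∩ T, v k + ∑ k ∈ (T \ S j).erase i, v k
      ≤ ∑ k ∈ T.erase i, v k := by
    rw [← Finset.sum_union]
    · apply Finset.sum_le_sum_of_subset_of_nonneg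
      · intro k hk
        rcases Finset.mem_union.mp hk with h | h
        · exact Finset.mem_erase.mpr ⟨(Finset.mem_erase.mp (Finset.mem_inter.mp h).1).1,
            (Finset.mem_inter.mp h).2⟩
        · exact Finset.mem_erase.mpr ⟨(Finset.mem_erase.mp h).1,
            (Finset.mem_sdiff.mp (Finset.mem_of_mem_erase h)).1⟩
      · intro k _ _; exact hv k
    · rw [Finset.disjoint_left]
      intro k hk hk'
      exact (Finset.mem_sdiff.mp (Finset.mem_of_mem_erase hk')).2
        (Finset.mem_erase.mp (Finset.mem_inter.mp hk).1).2
  calc ∑ k ∈ S j, (if k = i then 0 else v k)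
      = ∑ k ∈ (S j).erase i ∩ T, v k + ∑ k ∈ (S j).erase i \ T, v k := by
        rw [h1, Finset.sum_inter_add_sum_sdiff]
    _ = ∑ k ∈ (S j).erase i ∩ T, v k + ∑ k ∈ S j \ T, v k := by rw [hset]
    _ ≤ ∑ k ∈ (S j).erase i ∩ T, v k + ∑ k ∈ T \ S j, b k := by linarith [hCEF j]
    _ ≤ ∑ k ∈ (S j).erase i ∩ T, v k + (b i + ∑ k ∈ (T \ S j).erase i, v k) := by linarith
    _ ≤ b i + ∑ k ∈ T.erase i, v k := by linarith
end

section
/- The total revenue at any point in the IR/CEF polytope is at least the total VCG revenue ∑_{i∈T} p_i^{VCG}. -/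
open Finset

/-- The total revenue `∑_{i ∈ T} b i` at any point of the IR/CEF
polytope is at least the total VCG revenue `∑_{i ∈ T} p_i^VCG`, where
`p_i^VCG = max 0 (W₋ᵢ − ∑_{k ∈ T, k ≠ i} v k)` and `W₋ᵢ` is the maximum over all ads of
total value computed with `v i` set to `0`, and `T = S jT` is the welfare-maximizing ad. -/
theorem revenue_at_least_vcg_revenue {n m : ℕ} (v b : Fin n → ℝ)
    (S : Fin m → Finset (Fin n)) (T : Finset (Fin n)) (jT : Fin m) (hT : S jT = T)
    (hv : ∀ i, 0 ≤ v i)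
    (hmax : ∀ j, ∑ i ∈ S j, v i ≤ ∑ i ∈ T, v i)
    (hIR : ∀ i ∈ T, 0 ≤ b i ∧ b i ≤ v i)
    (hCEF : ∀ j, ∑ i ∈ S j \ T, v i ≤ ∑ i ∈ T \ S j, b i) :
    ∑ i ∈ T, max 0 ((Finset.univ.sup' ⟨jT, Finset.mem_univ jT⟩
        fun j => ∑ k ∈ S j, if k = i then 0 else v k) - ∑ k ∈ T.erase i, v k)
      ≤ ∑ i ∈ T, b i := by
  refine Finset.sum_le_sum fun i hi => ?_
  have hbi : 0 ≤ b i := (hIR i hi).1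
  refine max_le hbi ?_
  rw [sub_le_iff_le_add]
  refine Finset.sup'_le _ _ fun j _ => ?_
  -- rewrite the masked sum as a sum over `S j |>.erase i`
  have hmask : ∑ k ∈ S j, (if k = i then 0 else v k) = ∑ k ∈ (S j).erase i, v k := by
    have := Finset.sum_erase (S j) (f := fun k => if k = i then (0:ℝ) else v k)
      (a := i) (if_pos rfl)
    rw [← this]
    exact Finset.sum_congr rfl fun k hk => if_neg (Finset.ne_of_mem_erase hk)
  rw [hmask]
  by_cases hij : i ∈ S j
  · -- then the sum is ∑_{S j} v - v i ≤ ∑_T v - v i = ∑_{T.erase i} v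
    rw [Finset.sum_erase_eq_sub hij]
    have : ∑ k ∈ T.erase i, v k = ∑ k ∈ T, v k - v i := Finset.sum_erase_eq_sub hi
    linarith [hmax j, this]
  · rw [Finset.erase_eq_of_notMem hij]
    -- split S j into S j ∩ T and S j \ T
    have hsplit : ∑ k ∈ S j ∩ T, v k + ∑ k ∈ S j \ T, v k = ∑ k ∈ S j, v k :=
      Finset.sum_inter_add_sum_sdiff _ _ _
    have hiTS : i ∈ T \ S j := Finset.mem_sdiff.2 ⟨hi, hij⟩
    have hb : ∑ k ∈ T \ S j, b k = b i + ∑ k ∈ (T \ S j).erase i, b k :=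
      (Finset.add_sum_erase _ _ hiTS).symm
    have hbv : ∑ k ∈ (T \ S j).erase i, b k ≤ ∑ k ∈ (T \ S j).erase i, v k :=
      Finset.sum_le_sum fun k hk =>
        (hIR k (Finset.mem_sdiff.1 (Finset.mem_of_mem_erase hk)).1).2
    have hdisj : Disjoint (S j ∩ T) ((T \ S j).erase i) := by
      refine Finset.disjoint_left.2 fun k hk1 hk2 => ?_
      exact (Finset.mem_sdiff.1 (Finset.mem_of_mem_erase hk2)).2
        (Finset.mem_inter.1 hk1).1
    have hunion : (S j ∩ T) ∪ (T \ S j).erase i = T.erase i := by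
      ext k
      simp only [Finset.mem_union, Finset.mem_inter, Finset.mem_erase, Finset.mem_sdiff]
      constructor
      · rintro (⟨h1, h2⟩ | ⟨h1, h2, h3⟩)
        · exact ⟨fun h => hij (h ▸ h1), h2⟩
        · exact ⟨h1, h2⟩
      · rintro ⟨h1, h2⟩
        by_cases hk : k ∈ S j
        · exact Or.inl ⟨hk, h2⟩
        · exact Or.inr ⟨h1, h2, hk⟩
    have hsum : ∑ k ∈ S j ∩ T, v k + ∑ k ∈ (T \ S j).erase i, v k = ∑ k ∈ T.erase i, v k := by
      rw [← Finset.sum_union hdisj, hunion]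
    have := hCEF j
    linarith
end

section
/- If b is an equilibrium point of the IR/CEF polytope (for every k ∈ T with b_k > 0 there is an ad S_j ∌ k with ∑_{i∈T} b_i = ∑_{i∈S_j} b_i, where bidders outside T bid their values), then b lies on the Pareto frontier of the polytope: there is no other point b' in the polytope with b'_i ≤ b_i for all i ∈ T and b'_k < b_k for some k. -/
open Finset

/-- If `b` is an equilibrium point of the IR/CEF polytope — for every
`k ∈ T` with `b k > 0` there is an ad `S j ∌ k` whose total bid (bidders outside `T`
bidding their values) equals `T`'s total bid — then `b` lies on the Pareto frontier of
the polytope: no other point `b'` of the polytope has `b' i ≤ b i` for all `i ∈ T` with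
a strict inequality for some `k ∈ T`. -/
theorem equilibrium_on_pareto_frontier {n m : ℕ} (v b : Fin n → ℝ)
    (S : Fin m → Finset (Fin n)) (T : Finset (Fin n)) (jT : Fin m) (hT : S jT = T)
    (hIR : ∀ i ∈ T, 0 ≤ b i ∧ b i ≤ v i)
    (hCEF : ∀ j, ∑ i ∈ S j \ T, v i ≤ ∑ i ∈ T \ S j, b i)
    (heq : ∀ k ∈ T, 0 < b k → ∃ j, k ∉ S j ∧
      ∑ i ∈ T, b i = ∑ i ∈ S j, (if i ∈ T then b i else v i)) :
    ¬ ∃ b' : Fin n → ℝ,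
        (∀ i ∈ T, 0 ≤ b' i ∧ b' i ≤ v i) ∧
        (∀ j, ∑ i ∈ S j \ T, v i ≤ ∑ i ∈ T \ S j, b' i) ∧
        (∀ i ∈ T, b' i ≤ b i) ∧ (∃ k ∈ T, b' k < b k) := by
  rintro ⟨b', hIR', hCEF', hle, k, hkT, hlt⟩
  have hbk : 0 < b k := lt_of_le_of_lt (hIR' k hkT).1 hlt
  obtain ⟨j, hkj, htight⟩ := heq k hkT hbk
  -- split ∑_{T} b = ∑_{T ∩ S j} b + ∑_{T \ S j} b
  have h1 : ∑ i ∈ T, b i = ∑ i ∈ T ∩ S j, b i + ∑ i ∈ T \ S j, b i :=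
    (Finset.sum_inter_add_sum_sdiff T (S j) b).symm
  have h2 : ∑ i ∈ S j, (if i ∈ T then b i else v i)
      = ∑ i ∈ S j ∩ T, b i + ∑ i ∈ S j \ T, v i := by
    rw [← Finset.sum_inter_add_sum_sdiff (S j) T (fun i => if i ∈ T then b i else v i)]
    congr 1
    · exact Finset.sum_congr rfl fun i hi => if_pos (Finset.mem_inter.mp hi).2
    · exact Finset.sum_congr rfl fun i hi => if_neg (Finset.mem_sdiff.mp hi).2
  have hTS : ∑ i ∈ T ∩ S j, b i = ∑ i ∈ S j ∩ T, b i := by rw [Finset.inter_comm]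
  have key : ∑ i ∈ T \ S j, b i = ∑ i ∈ S j \ T, v i := by
    have := htight
    rw [h1, h2, hTS] at this
    linarith
  -- ∑_{T\Sj} b' < ∑_{T\Sj} b
  have hstrict : ∑ i ∈ T \ S j, b' i < ∑ i ∈ T \ S j, b i := by
    apply Finset.sum_lt_sum
    · intro i hi
      exact hle i (Finset.mem_sdiff.mp hi).1
    · exact ⟨k, Finset.mem_sdiff.mpr ⟨hkT, hkj⟩, hlt⟩
  have := hCEF' j
  linarith [key]
end

section
/- Suppose the VCG payment of every bidder i in the winning ad T is zero, i.e., for each i ∈ T the welfare-maximizing ad remains T after removing i's value; then every single-bidder deviation cannot change VCG revenue from zero for that bidder, and in particular VCG revenue is 0 while any CEF bid vector has revenue at least max_{j: S_j ≠ T} ∑_{i∈S_j\T} v_i, which can be strictly positive. -/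
open Finset

/-- Suppose the VCG payment of every bidder `i` in the
welfare-maximizing winning ad `T` is zero — i.e. for each `i ∈ T` the ad `T` remains
welfare-maximizing after removing `i`'s value (`W₋ᵢ ≤ ∑_{k ∈ T, k ≠ i} v k`). Then VCG
revenue is `0`, while any non-negative CEF bid vector has revenue at least
`∑_{i ∈ S j \ T} v i` for every non-winning ad `S j ≠ T`; in particular, if some
non-winning ad has `∑_{i ∈ S j \ T} v i > 0`, the CEF revenue is strictly positive. -/
theorem vcg_zero_but_cef_positive {n m : ℕ} (v : Fin n → ℝ)
    (S : Fin m → Finset (Fin n)) (T : Finset (Fin n)) (jT : Fin m) (hT : S jT = T)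
    (hv : ∀ i, 0 ≤ v i)
    (hmax : ∀ j, ∑ i ∈ S j, v i ≤ ∑ i ∈ T, v i)
    (hzero : ∀ i ∈ T, ∀ j, ∑ k ∈ S j, (if k = i then 0 else v k) ≤ ∑ k ∈ T.erase i, v k)
    (j0 : Fin m) (hj0 : S j0 ≠ T) (hpos : 0 < ∑ i ∈ S j0 \ T, v i) :
    (∑ i ∈ T, max 0 ((Finset.univ.sup' ⟨jT, Finset.mem_univ jT⟩
        fun j => ∑ k ∈ S j, if k = i then 0 else v k) - ∑ k ∈ T.erase i, v k) = 0) ∧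
    (∀ b : Fin n → ℝ, (∀ i, 0 ≤ b i) →
      (∀ j, ∑ i ∈ S j \ T, v i ≤ ∑ i ∈ T \ S j, b i) →
      (∀ j, S j ≠ T → ∑ i ∈ S j \ T, v i ≤ ∑ i ∈ T, b i) ∧ 0 < ∑ i ∈ T, b i) := by
  constructor
  · apply Finset.sum_eq_zero
    intro i hi
    have h : (Finset.univ.sup' ⟨jT, Finset.mem_univ jT⟩
        fun j => ∑ k ∈ S j, if k = i then 0 else v k) ≤ ∑ k ∈ T.erase i, v k := by
      apply Finset.sup'_le
      intro j _
      exact hzero i hi j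
    simp [max_eq_left, sub_nonpos.mpr h]
  · intro b hb hcef
    have key : ∀ j, S j ≠ T → ∑ i ∈ S j \ T, v i ≤ ∑ i ∈ T, b i := by
      intro j _
      exact (hcef j).trans (Finset.sum_le_sum_of_subset_of_nonneg
        (Finset.sdiff_subset) (fun i hi _ => hb i))
    exact ⟨key, lt_of_lt_of_le hpos (key j0 hj0)⟩
end

section
/- The bid vector output by the egalitarian bid-lowering algorithm satisfies IR, non-negativity, CEF, and the equilibrium condition: every i ∈ T with b_i > 0 participates in a tight constraint ∑_{i∈T} b_i = ∑_{i∈S_j} b_i for some ad S_j not containing i. -/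
open Finset

/-- Total bid of ad `A` when members of the winning ad `T` bid `b` and all other
bidders bid their values `v`. -/
def totalBid {n : ℕ} (v : Fin n → ℝ) (T : Finset (Fin n)) (b : Fin n → ℝ)
    (A : Finset (Fin n)) : ℝ :=
  ∑ i ∈ A, if i ∈ T then b i else v i

/-- One step of the egalitarian bid-lowering algorithm, acting on states
`(bids, fixed set)`: the unfixed bids of `T` are uniformly lowered by some `δ ≥ 0`
until a bid hits `0` or some ad `S j` ties `T`'s total, at which point the bidders of
`T \ S j` (resp. the bidder that hit `0`) become fixed; newly fixed bidders are fixed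
either at `0` or because of a tight tied ad avoiding them, bids of `T` stay
non-negative, `T` keeps the (weakly) highest total, and whenever an ad ties `T`,
the bidders of `T` outside it are fixed. -/
def EgalStep {n m : ℕ} (v : Fin n → ℝ) (S : Fin m → Finset (Fin n))
    (T : Finset (Fin n))
    (s s' : (Fin n → ℝ) × Finset (Fin n)) : Prop :=
  ∃ δ : ℝ, 0 ≤ δ ∧
    s'.1 = (fun i => if i ∈ T \ s.2 then s.1 i - δ else s.1 i) ∧
    s.2 ⊂ s'.2 ∧ s'.2 ⊆ T ∧
    (∀ i ∈ T, 0 ≤ s'.1 i) ∧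
    (∀ j, totalBid v T s'.1 (S j) ≤ totalBid v T s'.1 T) ∧
    (∀ i ∈ s'.2 \ s.2,
      s'.1 i = 0 ∨ ∃ j, i ∉ S j ∧ totalBid v T s'.1 (S j) = totalBid v T s'.1 T) ∧
    (∀ j, S j ≠ T → totalBid v T s'.1 (S j) = totalBid v T s'.1 T → T \ S j ⊆ s'.2)


lemma totalBid_shift {n : ℕ} (v : Fin n → ℝ) (T F A : Finset (Fin n)) (c : Fin n → ℝ)
    (δ : ℝ) :
    totalBid v T (fun i => if i ∈ T \ F then c i - δ else c i) A
      = totalBid v T c A - (A ∩ (T \ F)).card * δ := by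
  unfold totalBid
  have h : ∀ i ∈ A, (if i ∈ T then (if i ∈ T \ F then c i - δ else c i) else v i)
      = (if i ∈ T then c i else v i) - (if i ∈ T \ F then δ else 0) := by
    intro i _
    by_cases h : i ∈ T \ F
    · simp [h, (mem_sdiff.mp h).1]
    · simp [h]
  rw [Finset.sum_congr rfl h, Finset.sum_sub_distrib]
  congr 1
  rw [Finset.sum_ite_mem, Finset.sum_const, nsmul_eq_mul]

lemma totalBid_split {n : ℕ} (v : Fin n → ℝ) (T : Finset (Fin n)) (c : Fin n → ℝ)
    (A : Finset (Fin n)) :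
    totalBid v T c A = ∑ i ∈ A ∩ T, c i + ∑ i ∈ A \ T, v i := by
  unfold totalBid
  rw [← Finset.sum_filter_add_sum_filter_not A (· ∈ T)]
  congr 1
  · rw [Finset.filter_mem_eq_inter]
    exact Finset.sum_congr rfl (fun i hi => if_pos (mem_inter.mp hi).2)
  · have : A.filter (fun i => ¬ i ∈ T) = A \ T := by
      ext i; simp [mem_sdiff, and_comm]
    rw [this]
    exact Finset.sum_congr rfl (fun i hi => if_neg (mem_sdiff.mp hi).2)

/-- Starting from all bids equal to the values (and no bidder fixed),
any terminal state `(b, T)` of the egalitarian bid-lowering algorithm — i.e. any state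
with all bidders of `T` fixed that is reachable by algorithm steps — satisfies IR and
non-negativity (`0 ≤ b i ≤ v i`), CEF, and the equilibrium condition: every `i ∈ T` with
`b i > 0` lies in a tight constraint `∑_{i ∈ T} b i = ∑_{i ∈ S j} b i` for some ad
`S j ∌ i` (bidders outside `T` bidding their values). -/
theorem egalitarian_algorithm_output_is_cef_equilibrium {n m : ℕ}
    (v : Fin n → ℝ) (hv : ∀ i, 0 ≤ v i)
    (S : Fin m → Finset (Fin n)) (T : Finset (Fin n)) (jT : Fin m) (hT : S jT = T)
    (hmax : ∀ j, ∑ i ∈ S j, v i ≤ ∑ i ∈ T, v i)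
    (b : Fin n → ℝ)
    (hreach : Relation.ReflTransGen (EgalStep v S T) (v, (∅ : Finset (Fin n))) (b, T)) :
    (∀ i ∈ T, 0 ≤ b i ∧ b i ≤ v i) ∧
    (∀ j, ∑ i ∈ S j \ T, v i ≤ ∑ i ∈ T \ S j, b i) ∧
    (∀ i ∈ T, 0 < b i → ∃ j, i ∉ S j ∧
      totalBid v T b (S j) = totalBid v T b T) := by
  -- Invariant maintained along the algorithm
  have key : ∀ s : (Fin n → ℝ) × Finset (Fin n),
      Relation.ReflTransGen (EgalStep v S T) (v, (∅ : Finset (Fin n))) s →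
      s.2 ⊆ T ∧ (∀ i ∈ T, 0 ≤ s.1 i ∧ s.1 i ≤ v i) ∧
      (∀ j, totalBid v T s.1 (S j) ≤ totalBid v T s.1 T) ∧
      (∀ i ∈ s.2, s.1 i = 0 ∨ ∃ j, i ∉ S j ∧
        totalBid v T s.1 (S j) = totalBid v T s.1 T ∧ T \ S j ⊆ s.2) := by
    intro s hs
    induction hs with
    | refl =>
        refine ⟨by simp, fun i _ => ⟨hv i, le_refl _⟩, fun j => ?_, by simp⟩
        have h1 : ∀ A : Finset (Fin n), totalBid v T v A = ∑ i ∈ A, v i := by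
          intro A; unfold totalBid; exact Finset.sum_congr rfl (fun i _ => ite_self _)
        simpa [h1] using hmax j
    | @tail p q hp hstep ih =>
        obtain ⟨δ, hδ, hq1, hsub, hqT, hnn, hle, hnew, htight⟩ := hstep
        obtain ⟨ihT, ihbd, ihle, ihfix⟩ := ih
        refine ⟨hqT, ?_, hle, ?_⟩
        · intro i hi
          refine ⟨hnn i hi, ?_⟩
          rw [hq1]
          by_cases h : i ∈ T \ p.2
          · simp only [h, if_pos]
            linarith [(ihbd i hi).2]
          · simp only [h, if_neg, not_false_iff]
            exact (ihbd i hi).2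
        · intro i hi
          by_cases hold : i ∈ p.2
          · rcases ihfix i hold with h0 | ⟨j, hij, htie, hTS⟩
            · left
              rw [hq1]
              have : i ∉ T \ p.2 := fun h => (mem_sdiff.mp h).2 hold
              simp only [this, if_neg, not_false_iff]
              exact h0
            · right
              refine ⟨j, hij, ?_, hTS.trans hsub.subset⟩
              have hTF : T \ p.2 ⊆ S j := by
                intro x hx
                by_contra hxS
                exact (mem_sdiff.mp hx).2 (hTS (mem_sdiff.mpr ⟨(mem_sdiff.mp hx).1, hxS⟩))
              have h1 : S j ∩ (T \ p.2) = T \ p.2 :=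
                Finset.inter_eq_right.mpr hTF
              have h2 : T ∩ (T \ p.2) = T \ p.2 :=
                Finset.inter_eq_right.mpr (Finset.sdiff_subset)
              rw [hq1, totalBid_shift, totalBid_shift, h1, h2, htie]
          · have hinew : i ∈ q.2 \ p.2 := mem_sdiff.mpr ⟨hi, hold⟩
            rcases hnew i hinew with h0 | ⟨j, hij, htie⟩
            · exact Or.inl h0
            · right
              refine ⟨j, hij, htie, ?_⟩
              have hiT : i ∈ T := hqT hi
              have hne : S j ≠ T := fun h => hij (h ▸ hiT)
              exact htight j hne htie
  obtain ⟨-, hbd, hle, hfix⟩ := key (b, T) hreach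
  refine ⟨hbd, ?_, ?_⟩
  · intro j
    have h := hle j
    rw [totalBid_split, totalBid_split] at h
    simp only [Finset.inter_self, Finset.sdiff_self, Finset.sum_empty, add_zero] at h
    have hsplit : ∑ i ∈ T, b i = ∑ i ∈ T ∩ S j, b i + ∑ i ∈ T \ S j, b i :=
      (Finset.sum_inter_add_sum_sdiff T (S j) b).symm
    rw [Finset.inter_comm] at hsplit
    linarith [h, hsplit.le, hsplit.ge]
  · intro i hi hpos
    rcases hfix i hi with h0 | ⟨j, hij, htie, -⟩
    · linarith
    · exact ⟨j, hij, htie⟩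
end

section
/- If two ads S_1 and S_2 satisfy S_1 ⊆ S_2 (so the second ad's supporters include all of the first's) and all values are positive, then in the VCG coopetitive auction S_2 wins and every bidder in S_1 pays zero. -/
open Finset

/-- In a coopetitive VCG auction with the two ads `S₁ ⊆ S₂` and all
values positive, the ad `S₂` wins (it has the weakly larger total value) and every
bidder `i ∈ S₁` pays zero: `max 0 (W₋ᵢ − ∑_{k ∈ S₂, k ≠ i} v k) = 0`, where `W₋ᵢ` is
the maximum over the ads of total value with `v i` replaced by `0`. -/
theorem nested_ads_vcg_free_riders {n : ℕ} (v : Fin n → ℝ) (hv : ∀ i, 0 < v i)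
    (S₁ S₂ : Finset (Fin n)) (hsub : S₁ ⊆ S₂) :
    (∑ i ∈ S₁, v i ≤ ∑ i ∈ S₂, v i) ∧
    (∀ i ∈ S₁,
      max 0 ((max (∑ k ∈ S₁, if k = i then 0 else v k)
                  (∑ k ∈ S₂, if k = i then 0 else v k))
          - ∑ k ∈ S₂.erase i, v k) = 0) := by
  have key : ∀ (S : Finset (Fin n)) (i : Fin n),
      (∑ k ∈ S, if k = i then 0 else v k) = ∑ k ∈ S.erase i, v k := by
    intro S i
    rw [show S.erase i = S.filter (· ≠ i) from (Finset.filter_ne' S i).symm,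
      Finset.sum_filter]
    simp [eq_comm]
  constructor
  · exact Finset.sum_le_sum_of_subset_of_nonneg hsub (fun i _ _ => (hv i).le)
  · intro i hi
    rw [key, key]
    have h1 : ∑ k ∈ S₁.erase i, v k ≤ ∑ k ∈ S₂.erase i, v k :=
      Finset.sum_le_sum_of_subset_of_nonneg (Finset.erase_subset_erase i hsub)
        (fun j _ _ => (hv j).le)
    rw [max_eq_right h1]
    simp
end
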